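/- arXiv:2503.12375 — 2 statements merged into one kernel-verified Lean document; each statement's English description precedes it below -/
import Mathlib

section
/- Let $C_1, C_2 \ge 0$ with $C_1 + C_2 \le 1$, and let $\theta_1, \theta_2 \in \mathbb{R}$. Define the complex number $G_k = C_1(1 - e^{i\theta_1}) + C_2(1 - e^{i\theta_2}) - 1$. Then $|G_k| \le 1$. -/
open Complex

theorem norm_smul_add_smul_add_smul_le_one {E : Type*} [SeminormedAddCommGroup E]
    [NormedSpace ℝ E] {a b c : ℝ} {x y z : E} (ha : 0 ≤ a) (hb : 0 ≤ b) (hc : 0 ≤ c)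
    (habc : a + b + c = 1) (hx : ‖x‖ ≤ 1) (hy : ‖y‖ ≤ 1) (hz : ‖z‖ ≤ 1) :
    ‖a • x + b • y + c • z‖ ≤ 1 :=
  calc ‖a • x + b • y + c • z‖ ≤ ‖a • x‖ + ‖b • y‖ + ‖c • z‖ := norm_add₃_le
    _ = a * ‖x‖ + b * ‖y‖ + c * ‖z‖ := by
      rw [norm_smul_of_nonneg ha, norm_smul_of_nonneg hb, norm_smul_of_nonneg hc]
    _ ≤ a * 1 + b * 1 + c * 1 := by gcongr
    _ = 1 := by rw [mul_one, mul_one, mul_one, habc]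

theorem stmt0 (C1 C2 θ1 θ2 : ℝ) (h1 : 0 ≤ C1) (h2 : 0 ≤ C2) (hsum : C1 + C2 ≤ 1) :
    ‖(C1 : ℂ) * (1 - Complex.exp (θ1 * I)) +
      (C2 : ℂ) * (1 - Complex.exp (θ2 * I)) - 1‖ ≤ 1 := by
  -- `-G_k` is a convex combination of `e^{iθ₁}`, `e^{iθ₂}` and `1`.
  have hG : (C1 : ℂ) * (1 - Complex.exp (θ1 * I)) + (C2 : ℂ) * (1 - Complex.exp (θ2 * I)) - 1
      = -(C1 • Complex.exp (θ1 * I) + C2 • Complex.exp (θ2 * I) + (1 - C1 - C2) • (1 : ℂ)) := by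
    simp only [Complex.real_smul]
    push_cast
    ring
  rw [hG, norm_neg]
  exact norm_smul_add_smul_add_smul_le_one h1 h2 (by linarith) (by ring)
    (norm_exp_ofReal_mul_I θ1).le (norm_exp_ofReal_mul_I θ2).le norm_one.le
end

section
/- Let $C_1, C_2 \ge 0$ with $C_1 + C_2 \le 1$, let $\theta_1, \theta_2 \in \mathbb{R}$, let $C_{\mu 1}, C_{\mu 2} \ge 0$, and set $G_k = C_1(1-e^{i\theta_1}) + C_2(1-e^{i\theta_2}) - 1$. Then the unique root $g_1$ of the linear polynomial $\phi_1(g) = g(1 - C_{\mu 1}(\cos\theta_1 - 1) - C_{\mu 2}(\cos\theta_2 - 1)) + G_k$ satisfies $|g_1| \le 1$. -/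
/-!
Writing `G_k = -((1 - C₁ - C₂) + C₁ e^{iθ₁} + C₂ e^{iθ₂})` exhibits `-G_k` as a convex combination
of points of the closed unit disc, so `‖G_k‖ ≤ 1`. The coefficient of `g` is a real number
`≥ 1` because `cos θ ≤ 1`, hence `‖g₁‖ = ‖G_k‖ / (coefficient) ≤ 1`.
-/

open Complex

lemma norm_convex_comb_one_le_one {E : Type*} [SeminormedAddCommGroup E] [NormedSpace ℝ E]
    {x y z : E} (hx : ‖x‖ ≤ 1) (hy : ‖y‖ ≤ 1) (hz : ‖z‖ ≤ 1) {a b : ℝ} (ha : 0 ≤ a) (hb : 0 ≤ b)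
    (hab : a + b ≤ 1) : ‖(1 - a - b) • x + a • y + b • z‖ ≤ 1 :=
  calc ‖(1 - a - b) • x + a • y + b • z‖
      ≤ ‖(1 - a - b) • x‖ + ‖a • y‖ + ‖b • z‖ := norm_add₃_le
    _ = (1 - a - b) * ‖x‖ + a * ‖y‖ + b * ‖z‖ := by
        rw [norm_smul_of_nonneg (by linarith), norm_smul_of_nonneg ha, norm_smul_of_nonneg hb]
    _ ≤ (1 - a - b) * 1 + a * 1 + b * 1 := by gcongr; linarith
    _ = 1 := by ring

lemma one_le_one_sub_mul_cos_sub_one_sub_mul_cos_sub_one {a b : ℝ} (ha : 0 ≤ a) (hb : 0 ≤ b)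
    (θ₁ θ₂ : ℝ) : 1 ≤ 1 - a * (Real.cos θ₁ - 1) - b * (Real.cos θ₂ - 1) := by
  nlinarith [mul_nonneg ha (sub_nonneg.mpr (Real.cos_le_one θ₁)),
    mul_nonneg hb (sub_nonneg.mpr (Real.cos_le_one θ₂))]

lemma norm_le_one_of_mul_add_eq_zero {𝕜 : Type*} [NormedDivisionRing 𝕜] {g d c : 𝕜}
    (hd : 1 ≤ ‖d‖) (hc : ‖c‖ ≤ 1) (h : g * d + c = 0) : ‖g‖ ≤ 1 := by
  have hgd : ‖g‖ * ‖d‖ = ‖c‖ := by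
    rw [← norm_mul, eq_neg_of_add_eq_zero_left h, norm_neg]
  nlinarith [norm_nonneg g]

theorem stmt2 (C1 C2 θ1 θ2 Cμ1 Cμ2 : ℝ) (h1 : 0 ≤ C1) (h2 : 0 ≤ C2)
    (hsum : C1 + C2 ≤ 1) (hμ1 : 0 ≤ Cμ1) (hμ2 : 0 ≤ Cμ2)
    (Gk : ℂ)
    (hGk : Gk = (C1 : ℂ) * (1 - Complex.exp (θ1 * I)) +
      (C2 : ℂ) * (1 - Complex.exp (θ2 * I)) - 1)
    (g1 : ℂ)
    (hroot : g1 * ((1 : ℂ) - (Cμ1 : ℂ) * ((Real.cos θ1 : ℂ) - 1)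
        - (Cμ2 : ℂ) * ((Real.cos θ2 : ℂ) - 1)) + Gk = 0) :
    ‖g1‖ ≤ 1 := by
  refine norm_le_one_of_mul_add_eq_zero ?_ ?_ hroot
  · have hd := one_le_one_sub_mul_cos_sub_one_sub_mul_cos_sub_one hμ1 hμ2 θ1 θ2
    have hcast : (1 : ℂ) - (Cμ1 : ℂ) * ((Real.cos θ1 : ℂ) - 1) - (Cμ2 : ℂ) * ((Real.cos θ2 : ℂ) - 1)
        = ((1 - Cμ1 * (Real.cos θ1 - 1) - Cμ2 * (Real.cos θ2 - 1) : ℝ) : ℂ) := by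
      push_cast; ring
    rw [hcast, norm_real, Real.norm_of_nonneg (by linarith)]
    exact hd
  · have hGk' : Gk = -((1 - C1 - C2) • (1 : ℂ) + C1 • exp (θ1 * I) + C2 • exp (θ2 * I)) := by
      rw [hGk]; simp only [Complex.real_smul]; push_cast; ring
    rw [hGk', norm_neg]
    exact norm_convex_comb_one_le_one (by simp) (norm_exp_ofReal_mul_I θ1).le
      (norm_exp_ofReal_mul_I θ2).le h1 h2 hsum
end
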